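/- arXiv:0812.0435 — 2 statements merged into one kernel-verified Lean document; each statement's English description precedes it below -/
import Mathlib

section
/- Let λ/μ be a skew Young diagram and let D be any intermediate diagram occurring in some execution of Algorithm 1 starting from λ/μ. Then, after deleting the empty rows of D, the resulting diagram is almost skew: it is row convex, its rightmost column indices r_i are weakly decreasing, and its sequence of leftmost column indices (l_1, …, l_k) is, for some indices 1 ≤ a ≤ i ≤ k, either of the form l_i ≤ l_{i+1} ≤ … ≤ l_k ≤ l_{i−1} ≤ l_{i−2} ≤ … ≤ l_1 or of the form l_a ≤ l_{a+1} ≤ … ≤ l_{i−2} ≤ l_i ≤ l_{i+1} ≤ … ≤ l_k ≤ l_{i−1} ≤ l_{a−1} ≤ l_{a−2} ≤ … ≤ l_1. -/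
open scoped ENat

/-- A diagram: a finite set of boxes `(i, j)` (row `i` from the top, column `j` from the left). -/
abbrev Dg := Finset (ℕ × ℕ)

/-- The set of column indices of boxes in row `i` of `D`. -/
def row (D : Dg) (i : ℕ) : Finset ℕ := (D.filter (fun b => b.1 = i)).image Prod.snd

/-- `l_i`: the least column index in row `i`, with the convention `l_i = ∞` for an empty row. -/
noncomputable def lRow (D : Dg) (i : ℕ) : ℕ∞ := (row D i).inf (fun j => (j : ℕ∞))

/-- `r_i`: the greatest column index in row `i`, with the convention `r_i = 0` for an empty row. -/
def rRow (D : Dg) (i : ℕ) : ℕ := (row D i).sup id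

/-- Index `i ≥ 2` with `l_{i-1} > l_i`. -/
def Violation (D : Dg) (i : ℕ) : Prop := 2 ≤ i ∧ lRow D i < lRow D (i - 1)

/-- `i` is the maximum index with `l_{i-1} > l_i`. -/
def MaxViolation (D : Dg) (i : ℕ) : Prop := Violation D i ∧ ∀ i', Violation D i' → i' ≤ i

/-- No index `i ≥ 2` has `l_{i-1} > l_i`. -/
def TerminalD (D : Dg) : Prop := ∀ i, ¬ Violation D i

/-- Step A is permitted at row `i`: `l_{i-1} > l_i` and (`r_i ≥ l_{i-1} - 1` or row `i-1` empty). -/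
def StepAOk (D : Dg) (i : ℕ) : Prop :=
  Violation D i ∧ (lRow D (i - 1) - 1 ≤ (rRow D i : ℕ∞) ∨ row D (i - 1) = ∅)

/-- `l_i ≤ q < l_{i-1}`: the columns affected by Step A at row `i`. -/
def InL (D : Dg) (i q : ℕ) : Prop := lRow D i ≤ (q : ℕ∞) ∧ (q : ℕ∞) < lRow D (i - 1)

/-- `D'` is the result of performing Step A on `D` at row `i`: for each column
`l_i ≤ q < l_{i-1}`, membership of `(i, q)` and `(i-1, q)` is exchanged. -/
def IsStepA (D D' : Dg) (i : ℕ) : Prop :=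
  ∀ p q : ℕ,
    (p = i → InL D i q → ((p, q) ∈ D' ↔ (i - 1, q) ∈ D)) ∧
    (p = i - 1 → InL D i q → ((p, q) ∈ D' ↔ (i, q) ∈ D)) ∧
    (¬((p = i ∨ p = i - 1) ∧ InL D i q) → ((p, q) ∈ D' ↔ (p, q) ∈ D))

/-- Step B is permitted at row `i`: `l_{i-1} > l_i` and `r_i ≤ r_{i-1} - 1`. -/
def StepBOk (D : Dg) (i : ℕ) : Prop :=
  Violation D i ∧ rRow D i ≤ rRow D (i - 1) - 1

/-- The rows affected by Step B at row `i`: rows `p ≥ i` with `l_p = l_i`. -/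
def BRow (D : Dg) (i p : ℕ) : Prop := i ≤ p ∧ lRow D p = lRow D i

/-- `D'` is the result of performing Step B on `D` at row `i`: in each row `p ≥ i` with
`l_p = l_i`, the box `(p, l_p)` is removed and the box `(p, r_p + 1)` is added. -/
def IsStepB (D D' : Dg) (i : ℕ) : Prop :=
  ∀ p q : ℕ,
    (BRow D i p →
      ((p, q) ∈ D' ↔ (((p, q) ∈ D ∧ (q : ℕ∞) ≠ lRow D p) ∨ q = rRow D p + 1))) ∧
    (¬ BRow D i p → ((p, q) ∈ D' ↔ (p, q) ∈ D))

/-- One step of Algorithm 1: at the maximum index `i` with `l_{i-1} > l_i`, perform a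
permitted Step A or Step B. -/
def AlgStep (D D' : Dg) : Prop :=
  ∃ i, MaxViolation D i ∧ ((StepAOk D i ∧ IsStepA D D' i) ∨ (StepBOk D i ∧ IsStepB D D' i))

/-- An execution of Algorithm 1 starting from `D0`: a finite sequence of diagrams beginning
at `D0`, each obtained from the previous by a step of Algorithm 1, ending at a terminal
diagram. -/
def IsExec (D0 : Dg) (L : List Dg) : Prop :=
  L.head? = some D0 ∧ L.Chain' AlgStep ∧ ∀ Dl, L.getLast? = some Dl → TerminalD Dl

/-- The indices of nonempty rows of `D`, from top to bottom. -/
def rowIdx (D : Dg) : List ℕ := (D.image Prod.fst).sort (· ≤ ·)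

/-- The lengths of the nonempty rows of `D`, read from top to bottom. -/
def rowLengths (D : Dg) : List ℕ := (rowIdx D).map (fun p => (row D p).card)

/-- The execution `L` terminates at a diagram whose nonempty rows, read from top to bottom,
have lengths `ν 1, ν 2, …`. -/
def EndsAt (L : List Dg) (ν : ℕ → ℕ) : Prop :=
  ∃ Dl, L.getLast? = some Dl ∧ ∀ m : ℕ, (rowLengths Dl).getD m 0 = ν (m + 1)

/-- A partition, written as a weakly decreasing function on indices `1, 2, …`. -/
def IsPartition (f : ℕ → ℕ) : Prop := f 0 = 0 ∧ ∀ p, 1 ≤ p → f (p + 1) ≤ f p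

/-- The partition `f` is contained in the `k × w` rectangle. -/
def InRect (f : ℕ → ℕ) (k w : ℕ) : Prop := (∀ p, k < p → f p = 0) ∧ ∀ p, f p ≤ w

/-- The skew Young diagram `lam / mu` (boxes of `lam` not in `mu`), rows `1, …, k`. -/
def skewD (lam mu : ℕ → ℕ) (k : ℕ) : Dg :=
  (Finset.Icc 1 k).biUnion (fun p => (Finset.Icc (mu p + 1) (lam p)).image (fun q => (p, q)))

/-- `lam^∨`, the complementary partition of `lam` inside the `k × w` rectangle. -/
def dualP (lam : ℕ → ℕ) (k w : ℕ) : ℕ → ℕ :=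
  fun p => if 1 ≤ p ∧ p ≤ k then w - lam (k + 1 - p) else 0

/-- `D` is row convex. -/
def RowConvex (D : Dg) : Prop :=
  ∀ i j j' j'', (i, j) ∈ D → (i, j') ∈ D → j ≤ j'' → j'' ≤ j' → (i, j'') ∈ D

/-- `l` is weakly increasing on positions `s, s+1, …, t`. -/
def MonoL (l : ℕ → ℕ∞) (s t : ℕ) : Prop := ∀ p q, s ≤ p → p ≤ q → q ≤ t → l p ≤ l q

/-- `l` is weakly decreasing on positions `s, s+1, …, t`. -/
def AntiL (l : ℕ → ℕ∞) (s t : ℕ) : Prop := ∀ p q, s ≤ p → p ≤ q → q ≤ t → l q ≤ l p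

/-- The sequence `(l_1, …, l_k)` of leftmost column indices of `D` has, for some indices
`1 ≤ a ≤ i ≤ k`, either the form `l_i ≤ l_{i+1} ≤ … ≤ l_k ≤ l_{i-1} ≤ l_{i-2} ≤ … ≤ l_1`,
or the form
`l_a ≤ … ≤ l_{i-2} ≤ l_i ≤ … ≤ l_k ≤ l_{i-1} ≤ l_{a-1} ≤ … ≤ l_1`. -/
def LShape (D : Dg) (k : ℕ) : Prop :=
  ∃ a i, 1 ≤ a ∧ a ≤ i ∧ i ≤ k ∧
    ((MonoL (lRow D) i k ∧ (2 ≤ i → lRow D k ≤ lRow D (i - 1)) ∧ AntiL (lRow D) 1 (i - 1)) ∨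
     (2 ≤ i ∧ MonoL (lRow D) a (i - 2) ∧ (a ≤ i - 2 → lRow D (i - 2) ≤ lRow D i) ∧
      MonoL (lRow D) i k ∧ lRow D k ≤ lRow D (i - 1) ∧
      (2 ≤ a → lRow D (i - 1) ≤ lRow D (a - 1)) ∧ AntiL (lRow D) 1 (a - 1)))

/-- `D` is almost skew with nonempty rows exactly `1, …, k`: it is row convex, its `r_i`
are weakly decreasing, and its `l_i` satisfy one of the two inequality chains above. -/
def AlmostSkew (D : Dg) (k : ℕ) : Prop :=
  (∀ p, (row D p).Nonempty ↔ 1 ≤ p ∧ p ≤ k) ∧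
  RowConvex D ∧
  (∀ p q, 1 ≤ p → p ≤ q → q ≤ k → rRow D q ≤ rRow D p) ∧
  LShape D k

/-- Deleting the empty rows of `D`: each box is moved to the row given by the rank of its
row among the nonempty rows of `D`. -/
def compress (D : Dg) : Dg :=
  D.image (fun b => (((D.image Prod.fst).filter (fun p => p ≤ b.1)).card, b.2))


/-!
Algorithm 1 preserves the following invariant of a diagram: its boxes lie in columns `≥ 1`
(this rules out Step B below an empty row), its rows are convex, `r` decreases weakly along its
nonempty rows, and after deleting the empty rows the sequence `l` has one of the two shapes of
`LShape`. At the maximal index `i` with `l_{i-1} > l_i` the tail `l_i ≤ l_{i+1} ≤ …` is weakly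
increasing, which forces the turning point of the shape to sit at `i`. After compression a step
acts on `l` in one of four ways: Step A into an empty row `i - 1` does not change the compressed
diagram at all; otherwise it swaps `l_{i-1}` and `l_i`, or, if all of row `i` moves up, deletes
`l_i` and puts its value at `i - 1`; Step B adds one to those `l_p` with `p ≥ i` that equal `l_i`.
Each of these operations preserves the shape, and a skew diagram has the first shape with the
turning point at its last row.
-/

section Sequences

variable {m m' : ℕ → ℕ∞} {k s t : ℕ}

lemma monoL_of_succ (h : ∀ p, s ≤ p → p + 1 ≤ t → m p ≤ m (p + 1)) : MonoL m s t := by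
  have hm : MonotoneOn m (Set.Icc s t) :=
    monotoneOn_of_le_succ Set.ordConnected_Icc fun p _ hp hp' => by
      simp only [Order.succ_eq_add_one, Set.mem_Icc] at hp hp' ⊢
      exact h p hp.1 hp'.2
  exact fun p q hp hpq hq => hm ⟨hp, hpq.trans hq⟩ ⟨hp.trans hpq, hq⟩ hpq

lemma antiL_of_succ (h : ∀ p, s ≤ p → p + 1 ≤ t → m (p + 1) ≤ m p) : AntiL m s t := by
  have hm : AntitoneOn m (Set.Icc s t) :=
    antitoneOn_of_succ_le Set.ordConnected_Icc fun p _ hp hp' => by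
      simp only [Order.succ_eq_add_one, Set.mem_Icc] at hp hp' ⊢
      exact h p hp.1 hp'.2
  exact fun p q hp hpq hq => hm ⟨hp, hpq.trans hq⟩ ⟨hp.trans hpq, hq⟩ hpq

lemma MonoL.mono (h : MonoL m s t) {s' t' : ℕ} (hs : s ≤ s') (ht : t' ≤ t) : MonoL m s' t' :=
  fun p q hp hpq hq => h p q (hs.trans hp) hpq (hq.trans ht)

lemma AntiL.mono (h : AntiL m s t) {s' t' : ℕ} (hs : s ≤ s') (ht : t' ≤ t) : AntiL m s' t' :=
  fun p q hp hpq hq => h p q (hs.trans hp) hpq (hq.trans ht)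

lemma MonoL.congr (h : MonoL m s t) (he : ∀ e, s ≤ e → e ≤ t → m' e = m e) :
    MonoL m' s t :=
  fun p q hp hpq hq => by
    rw [he p hp (hpq.trans hq), he q (hp.trans hpq) hq]; exact h p q hp hpq hq

lemma AntiL.congr (h : AntiL m s t) (he : ∀ e, s ≤ e → e ≤ t → m' e = m e) :
    AntiL m' s t :=
  fun p q hp hpq hq => by
    rw [he p hp (hpq.trans hq), he q (hp.trans hpq) hq]; exact h p q hp hpq hq

lemma MonoL.bump {c : ℕ} (hmono : MonoL m c k)
    (hbump : ∀ e, c ≤ e → e ≤ k → m e = m c → m' e = m c + 1)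
    (hkeep : ∀ e, c ≤ e → e ≤ k → m e ≠ m c → m' e = m e) : MonoL m' c k := by
  intro p q hp hpq hq
  by_cases hpc : m p = m c
  · rw [hbump p hp (by omega) hpc]
    by_cases hqc : m q = m c
    · rw [hbump q (by omega) hq hqc]
    · rw [hkeep q (by omega) hq hqc]
      exact Order.add_one_le_of_lt ((hmono c q le_rfl (by omega) hq).lt_of_ne (Ne.symm hqc))
  · have hqc : m q ≠ m c := fun hqc =>
      hpc (le_antisymm (hqc ▸ hmono p q hp hpq hq) (hmono c p le_rfl hp (by omega)))
    rw [hkeep p hp (by omega) hpc, hkeep q (by omega) hq hqc]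
    exact hmono p q hp hpq hq

def FirstForm (m : ℕ → ℕ∞) (k i : ℕ) : Prop :=
  MonoL m i k ∧ (2 ≤ i → m k ≤ m (i - 1)) ∧ AntiL m 1 (i - 1)

def SecondForm (m : ℕ → ℕ∞) (k a i : ℕ) : Prop :=
  2 ≤ i ∧ MonoL m a (i - 2) ∧ (a ≤ i - 2 → m (i - 2) ≤ m i) ∧
    MonoL m i k ∧ m k ≤ m (i - 1) ∧ (2 ≤ a → m (i - 1) ≤ m (a - 1)) ∧
    AntiL m 1 (a - 1)

def IsLShape (m : ℕ → ℕ∞) (k : ℕ) : Prop :=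
  ∃ a i, 1 ≤ a ∧ a ≤ i ∧ i ≤ k ∧ (FirstForm m k i ∨ SecondForm m k a i)

lemma FirstForm.isLShape {i : ℕ} (h : FirstForm m k i) (hi : 1 ≤ i) (hik : i ≤ k) :
    IsLShape m k :=
  ⟨i, i, hi, le_rfl, hik, Or.inl h⟩

lemma SecondForm.isLShape {a i : ℕ} (h : SecondForm m k a i) (ha : 1 ≤ a) (hai : a ≤ i)
    (hik : i ≤ k) : IsLShape m k :=
  ⟨a, i, ha, hai, hik, Or.inr h⟩

structure IsLastDescent (m : ℕ → ℕ∞) (k c : ℕ) : Prop where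
  two_le : 2 ≤ c
  le : c ≤ k
  monoL : MonoL m c k
  lt : m c < m (c - 1)

lemma FirstForm.of_isLastDescent {c i : ℕ} (h : FirstForm m k i) (hd : IsLastDescent m k c) :
    FirstForm m k c := by
  obtain ⟨hc, hck, hmono, hdesc⟩ := hd
  obtain ⟨hmi, hki, hanti⟩ := h
  have hci : c ≤ i := by
    by_contra! hic
    exact (hmi (c - 1) c (by omega) (by omega) hck).not_gt hdesc
  refine ⟨hmono, fun _ => ?_, hanti.mono le_rfl (by omega)⟩
  rcases hci.eq_or_lt with rfl | hci
  · exact hki hc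
  · exact (hki (by omega)).trans (hanti (c - 1) (i - 1) (by omega) (by omega) le_rfl)

lemma SecondForm.firstForm {a i : ℕ} (h : SecondForm m k a i) (hai : i - 2 < a) :
    FirstForm m k i := by
  obtain ⟨hi, -, -, hmi, hki, hia, hanti⟩ := h
  refine ⟨hmi, fun _ => hki, antiL_of_succ fun p hp hpi => ?_⟩
  rcases Nat.lt_or_ge (p + 1) a with hpa | hpa
  · exact hanti p (p + 1) hp (by omega) (by omega)
  · rw [show p + 1 = i - 1 by omega]
    exact (hia (by omega)).trans (hanti p (a - 1) hp (by omega) le_rfl)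

lemma FirstForm.secondForm {c : ℕ} (h : FirstForm m k c) (hc : 2 ≤ c) :
    SecondForm m k (c - 1) c := by
  obtain ⟨hmono, hki, hanti⟩ := h
  exact ⟨hc, fun p q hp hpq hq => by rw [show p = q by omega], fun h => absurd h (by omega),
    hmono, hki hc, fun _ => hanti (c - 1 - 1) (c - 1) (by omega) (by omega) le_rfl,
    hanti.mono le_rfl (by omega)⟩

lemma IsLShape.exists_secondForm {c : ℕ} (h : IsLShape m k) (hd : IsLastDescent m k c) :
    ∃ a, 1 ≤ a ∧ a < c ∧ SecondForm m k a c := by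
  suffices FirstForm m k c ∨ ∃ a, 1 ≤ a ∧ a < c ∧ SecondForm m k a c by
    rcases this with hfirst | hsecond
    exacts [⟨c - 1, by have := hd.two_le; omega, by have := hd.two_le; omega,
      hfirst.secondForm hd.two_le⟩, hsecond]
  obtain ⟨a, i, ha, -, hik, hfirst | hsecond⟩ := h
  · exact Or.inl (hfirst.of_isLastDescent hd)
  by_cases hai : i - 2 < a
  · exact Or.inl ((hsecond.firstForm hai).of_isLastDescent hd)
  obtain ⟨hc, hck, hmono, hdesc⟩ := hd
  obtain ⟨hi, hma, hai2, hmi, hki, hia, hanti⟩ := hsecond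
  have hci : c ≤ i := by
    by_contra! hic
    exact (hmi (c - 1) c (by omega) (by omega) hck).not_gt hdesc
  rcases hci.eq_or_lt with rfl | hci
  · exact Or.inr ⟨a, ha, by omega, hi, hma, hai2, hmi, hki, hia, hanti⟩
  have hca : c ≤ a := by
    by_contra! hac
    refine hdesc.not_ge ?_
    rcases Nat.lt_or_ge c (i - 1) with hc' | hc'
    · exact hma (c - 1) c (by omega) (by omega) (by omega)
    · rw [show c = i - 1 by omega, show i - 1 - 1 = i - 2 by omega]
      exact (hai2 (by omega)).trans ((hmi i k le_rfl hik le_rfl).trans hki)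
  refine Or.inl ⟨hmono, fun _ => ?_, hanti.mono le_rfl (by omega)⟩
  calc m k ≤ m (i - 1) := hki
    _ ≤ m (a - 1) := hia (by omega)
    _ ≤ m (c - 1) := hanti (c - 1) (a - 1) (by omega) (by omega) le_rfl

section Descent

variable {c : ℕ} (hL : IsLShape m k) (hd : IsLastDescent m k c)
include hL hd

lemma IsLShape.last_le_of_isLastDescent : m k ≤ m (c - 1) := by
  obtain ⟨a, -, -, hsecond⟩ := hL.exists_secondForm hd
  exact hsecond.2.2.2.2.1

lemma IsLShape.of_swap (hprev : m' (c - 1) = m c) (hcur : m' c = m (c - 1))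
    (hrest : ∀ e, e ≠ c - 1 → e ≠ c → m' e = m e) : IsLShape m' k := by
  have ⟨hc, hck, hmono, hdesc⟩ := hd
  obtain ⟨a, ha, hac, -, hma, hac2, -, -, hca, hanti⟩ := hL.exists_secondForm hd
  have hma' : MonoL m' a (c - 1) := monoL_of_succ fun p hp hpc => by
    rw [hrest p (by omega) (by omega)]
    rcases Nat.lt_or_ge (p + 1) (c - 1) with hpc' | hpc'
    · rw [hrest (p + 1) (by omega) (by omega)]
      exact hma p (p + 1) hp (by omega) (by omega)
    · rw [show p + 1 = c - 1 by omega, hprev]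
      exact (hma p (c - 2) hp (by omega) le_rfl).trans (hac2 (by omega))
  have hturn : 2 ≤ a → m' c ≤ m' (a - 1) := fun ha2 => by
    rw [hcur, hrest (a - 1) (by omega) (by omega)]
    exact hca ha2
  have hanti' : AntiL m' 1 (a - 1) := hanti.congr fun e _ he => hrest e (by omega) (by omega)
  rcases hck.eq_or_lt with rfl | hck
  · refine FirstForm.isLShape (i := a) ⟨monoL_of_succ fun p hp hpc => ?_, hturn, hanti'⟩ ha
      (by omega)
    rcases Nat.lt_or_ge (p + 1) c with hpc' | hpc'
    · exact hma' p (p + 1) hp (by omega) (by omega)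
    · rw [show p = c - 1 by omega, show c - 1 + 1 = c by omega, hprev, hcur]
      exact hdesc.le
  · have hjoin : m' (c - 1) ≤ m' (c + 1) := by
      rw [hprev, hrest (c + 1) (by omega) (by omega)]
      exact hmono c (c + 1) le_rfl (by omega) hck
    have hlast : m' k ≤ m' c := by
      rw [hcur, hrest k (by omega) (by omega)]
      exact hL.last_le_of_isLastDescent hd
    have htail : MonoL m' (c + 1) k :=
      (hmono.mono (by omega) le_rfl).congr fun e he _ => hrest e (by omega) (by omega)
    exact SecondForm.isLShape (i := c + 1)
      ⟨by omega, hma', fun _ => hjoin, htail, hlast, hturn, hanti'⟩ ha (by omega) (by omega)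

lemma IsLShape.of_merge (hlo : ∀ e, e ≤ c - 2 → m' e = m e) (hprev : m' (c - 1) = m c)
    (hhi : ∀ e, c ≤ e → m' e = m (e + 1)) : IsLShape m' (k - 1) := by
  have ⟨hc, hck, hmono, hdesc⟩ := hd
  obtain ⟨a, ha, hac, -, hma, hac2, -, -, hca, hanti⟩ := hL.exists_secondForm hd
  have hlast : m' (k - 1) ≤ m (c - 1) := by
    rcases hck.eq_or_lt with rfl | hck
    · rw [hprev]; exact hdesc.le
    · rw [hhi (k - 1) (by omega), show k - 1 + 1 = k by omega]
      exact hL.last_le_of_isLastDescent hd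
  refine FirstForm.isLShape (i := a) ⟨monoL_of_succ fun p hp hpk => ?_, fun ha2 => ?_,
    hanti.congr fun e _ he => hlo e (by omega)⟩ ha (by omega)
  · rcases Nat.lt_or_ge (p + 1) (c - 1) with hpc | hpc
    · rw [hlo p (by omega), hlo (p + 1) (by omega)]
      exact hma p (p + 1) hp (by omega) (by omega)
    rcases hpc.eq_or_lt' with hpc | hpc
    · rw [hpc, hprev, hlo p (by omega)]
      exact (hma p (c - 2) hp (by omega) le_rfl).trans (hac2 (by omega))
    rcases Nat.lt_or_ge p c with hpc' | hpc'
    · rw [show p = c - 1 by omega, hprev, show c - 1 + 1 = c by omega, hhi c le_rfl]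
      exact hmono c (c + 1) le_rfl (by omega) (by omega)
    · rw [hhi p hpc', hhi (p + 1) (by omega)]
      exact hmono (p + 1) (p + 1 + 1) (by omega) (by omega) (by omega)
  · rw [hlo (a - 1) (by omega)]
    exact hlast.trans (hca ha2)

lemma IsLShape.of_bump (hlo : ∀ e, e < c → m' e = m e)
    (hbump : ∀ e, c ≤ e → e ≤ k → m e = m c → m' e = m c + 1)
    (hkeep : ∀ e, c ≤ e → e ≤ k → m e ≠ m c → m' e = m e) : IsLShape m' k := by
  have ⟨hc, hck, hmono, hdesc⟩ := hd
  obtain ⟨a, ha, hac, -, hma, hac2, -, -, hca, hanti⟩ := hL.exists_secondForm hd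
  have hlast : m' k ≤ m' (c - 1) := by
    rw [hlo (c - 1) (by omega)]
    by_cases hkc : m k = m c
    · rw [hbump k hck le_rfl hkc]
      exact Order.add_one_le_of_lt hdesc
    · rw [hkeep k hck le_rfl hkc]
      exact hL.last_le_of_isLastDescent hd
  refine SecondForm.isLShape (i := c) ⟨hc, hma.congr fun e _ he => hlo e (by omega),
    fun _ => ?_, hmono.bump hbump hkeep, hlast, fun ha2 => ?_,
    hanti.congr fun e _ he => hlo e (by omega)⟩ ha hac.le hck
  · rw [hlo (c - 2) (by omega), hbump c le_rfl hck rfl]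
    exact (hac2 (by omega)).trans le_self_add
  · rw [hlo (c - 1) (by omega), hlo (a - 1) (by omega)]
    exact hca ha2

end Descent

end Sequences

section Diagrams

variable {D D' : Dg} {i j p q : ℕ}

abbrev nonemptyRows (D : Dg) : Finset ℕ := D.image Prod.fst

@[simp] lemma mem_row : q ∈ row D p ↔ (p, q) ∈ D := by
  simp [row]

lemma mem_nonemptyRows : p ∈ nonemptyRows D ↔ (row D p).Nonempty := by
  simp [Finset.Nonempty]

lemma lRow_le (h : (p, q) ∈ D) : lRow D p ≤ q :=
  Finset.inf_le (mem_row.2 h)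

lemma le_rRow (h : (p, q) ∈ D) : q ≤ rRow D p :=
  Finset.le_sup (f := id) (mem_row.2 h)

lemma exists_mem_lRow_eq (h : (row D p).Nonempty) : ∃ j, (p, j) ∈ D ∧ lRow D p = j := by
  obtain ⟨j, hj, hje⟩ := Finset.exists_mem_eq_inf (row D p) h (fun j => (j : ℕ∞))
  exact ⟨j, mem_row.1 hj, hje⟩

lemma rRow_mem (h : (row D p).Nonempty) : (p, rRow D p) ∈ D := by
  obtain ⟨j, hj, hje⟩ := Finset.exists_mem_eq_sup (row D p) h id
  rw [rRow, hje]; exact mem_row.1 hj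

lemma lRow_eq_top (h : row D p = ∅) : lRow D p = ⊤ := by
  rw [lRow, h, Finset.inf_empty]

lemma lRow_eq_of_row_eq {p' : ℕ} (h : row D' p = row D p') : lRow D' p = lRow D p' := by
  rw [lRow, lRow, h]

lemma rRow_eq_of_row_eq {p' : ℕ} (h : row D' p = row D p') : rRow D' p = rRow D p' := by
  rw [rRow, rRow, h]

lemma lRow_eq_of_row_eq_Icc {a b : ℕ} (h : row D p = Finset.Icc a b) (hab : a ≤ b) :
    lRow D p = a := by
  refine le_antisymm (Finset.inf_le (by simp [h, hab])) (Finset.le_inf fun q hq => ?_)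
  rw [h, Finset.mem_Icc] at hq
  exact_mod_cast hq.1

lemma rRow_eq_of_row_eq_Icc {a b : ℕ} (h : row D p = Finset.Icc a b) (hab : a ≤ b) :
    rRow D p = b :=
  le_antisymm (Finset.sup_le fun q hq => by rw [h, Finset.mem_Icc] at hq; exact hq.2)
    (Finset.le_sup (f := id) (by simp [h, hab]))

lemma row_eq_Icc_of_rowConvex (hD : RowConvex D) {j : ℕ} (hj : (p, j) ∈ D)
    (hjl : lRow D p = j) :
    row D p = Finset.Icc j (rRow D p) := by
  ext q
  simp only [mem_row, Finset.mem_Icc]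
  refine ⟨fun hq => ⟨by exact_mod_cast hjl ▸ lRow_le hq, le_rRow hq⟩, fun hq => ?_⟩
  exact hD p j (rRow D p) q hj (rRow_mem ⟨j, mem_row.2 hj⟩) hq.1 hq.2

def mapRows (σ : ℕ → ℕ) (D : Dg) : Dg := D.image fun b => (σ b.1, b.2)

def rowRank (D : Dg) (x : ℕ) : ℕ := ((nonemptyRows D).filter (· ≤ x)).card

lemma compress_eq_mapRows : compress D = mapRows (rowRank D) D := rfl

section mapRows

variable {σ : ℕ → ℕ}

lemma mem_mapRows : (p, q) ∈ mapRows σ D ↔ ∃ p', (p', q) ∈ D ∧ σ p' = p := by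
  simp only [mapRows, Finset.mem_image, Prod.exists, Prod.mk.injEq]
  exact ⟨fun ⟨a, b, h, ha, hb⟩ => ⟨a, hb ▸ h, ha⟩,
    fun ⟨a, h, ha⟩ => ⟨a, q, h, ha, rfl⟩⟩

lemma nonemptyRows_mapRows : nonemptyRows (mapRows σ D) = (nonemptyRows D).image σ := by
  simp [mapRows, Finset.image_image, Function.comp_def]

variable (hσ : Set.InjOn σ (nonemptyRows D))
include hσ

lemma row_mapRows (hp : p ∈ nonemptyRows D) : row (mapRows σ D) (σ p) = row D p := by
  ext q
  simp only [mem_row, mem_mapRows]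
  refine ⟨fun ⟨p', hp', he⟩ => ?_, fun h => ⟨p, h, rfl⟩⟩
  rwa [← hσ (Finset.mem_image_of_mem _ hp') hp he]

lemma rowConvex_mapRows (hD : RowConvex D) : RowConvex (mapRows σ D) := by
  intro p j j' j'' hj hj' h1 h2
  obtain ⟨p₀, hp₀, rfl⟩ := mem_mapRows.1 hj
  have hp₀S : p₀ ∈ nonemptyRows D := Finset.mem_image_of_mem _ hp₀
  rw [← mem_row, row_mapRows hσ hp₀S, mem_row] at hj' ⊢
  exact hD p₀ j j' j'' hp₀ hj' h1 h2

end mapRows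

lemma compress_mapRows {σ : ℕ → ℕ} (hσ : StrictMonoOn σ (nonemptyRows D)) :
    compress (mapRows σ D) = compress D := by
  have hrank : ∀ p ∈ nonemptyRows D, rowRank (mapRows σ D) (σ p) = rowRank D p := by
    intro p hp
    rw [rowRank, rowRank, nonemptyRows_mapRows, Finset.filter_image,
      Finset.card_image_of_injOn (hσ.injOn.mono (Finset.filter_subset _ _))]
    congr 1
    exact Finset.filter_congr fun x hx => hσ.le_iff_le hx hp
  ext ⟨c, q⟩
  simp only [compress_eq_mapRows, mem_mapRows]
  constructor
  · rintro ⟨p, ⟨p₀, hp₀, rfl⟩, rfl⟩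
    exact ⟨p₀, hp₀, (hrank p₀ (Finset.mem_image_of_mem _ hp₀)).symm⟩
  · rintro ⟨p₀, hp₀, rfl⟩
    exact ⟨σ p₀, ⟨p₀, hp₀, rfl⟩, hrank p₀ (Finset.mem_image_of_mem _ hp₀)⟩

section rowRank

variable {c x : ℕ}

lemma rowRank_mono : Monotone (rowRank D) := fun _ _ h =>
  Finset.card_le_card (Finset.monotone_filter_right _ fun _ _ hp => hp.trans h)

lemma rowRank_strictMonoOn : StrictMonoOn (rowRank D) (nonemptyRows D) := by
  intro x _ y hy hxy
  refine Finset.card_lt_card ⟨Finset.monotone_filter_right _ fun _ _ hp => hp.trans hxy.le,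
    fun hsub => ?_⟩
  have := Finset.mem_filter.1 (hsub (Finset.mem_filter.2 ⟨hy, le_rfl⟩))
  exact absurd this.2 (not_le.2 hxy)

lemma one_le_rowRank (hp : p ∈ nonemptyRows D) : 1 ≤ rowRank D p :=
  Finset.card_pos.2 ⟨p, Finset.mem_filter.2 ⟨hp, le_rfl⟩⟩

lemma rowRank_le_card : rowRank D x ≤ (nonemptyRows D).card :=
  Finset.card_le_card (Finset.filter_subset _ _)

lemma exists_rowRank_eq (h1 : 1 ≤ c) (h2 : c ≤ (nonemptyRows D).card) :
    ∃ p ∈ nonemptyRows D, rowRank D p = c := by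
  have himage : (nonemptyRows D).image (rowRank D) = Finset.Icc 1 (nonemptyRows D).card := by
    refine Finset.eq_of_subset_of_card_le (fun c hc => ?_) ?_
    · obtain ⟨p, hp, rfl⟩ := Finset.mem_image.1 hc
      exact Finset.mem_Icc.2 ⟨one_le_rowRank hp, rowRank_le_card⟩
    · rw [Finset.card_image_of_injOn rowRank_strictMonoOn.injOn, Nat.card_Icc]; omega
  have hc : c ∈ (nonemptyRows D).image (rowRank D) := himage ▸ Finset.mem_Icc.2 ⟨h1, h2⟩
  exact Finset.mem_image.1 hc

lemma rowRank_sub_one_add_one (hi : 1 ≤ p) (hp : p ∈ nonemptyRows D) :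
    rowRank D (p - 1) + 1 = rowRank D p := by
  symm
  rw [rowRank, rowRank, ← Finset.card_insert_of_notMem (s := Finset.filter _ _) (a := p)
    (by simp; omega)]
  congr 1
  ext x
  simp only [Finset.mem_filter, Finset.mem_insert]
  constructor
  · rintro ⟨hx, hxp⟩
    rcases hxp.eq_or_lt with rfl | hxp
    exacts [Or.inl rfl, Or.inr ⟨hx, by omega⟩]
  · rintro (rfl | ⟨hx, hxp⟩)
    exacts [⟨hp, le_rfl⟩, ⟨hx, by omega⟩]

lemma rowRank_eq_of_nonemptyRows_eq (h : nonemptyRows D' = nonemptyRows D) :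
    rowRank D' = rowRank D := by
  unfold rowRank; rw [h]

lemma rowRank_of_nonemptyRows_eq_erase {i : ℕ} (h : nonemptyRows D' = (nonemptyRows D).erase i)
    (hi : i ∈ nonemptyRows D) (x : ℕ) :
    rowRank D' x = if i ≤ x then rowRank D x - 1 else rowRank D x := by
  rw [rowRank, rowRank, h, Finset.filter_erase]
  split_ifs with hix
  · exact Finset.card_erase_of_mem (Finset.mem_filter.2 ⟨hi, hix⟩)
  · exact congrArg _ (Finset.erase_eq_of_notMem (by simp [hix]))

end rowRank

section compress

variable {c : ℕ}

lemma row_compress_rowRank (hp : p ∈ nonemptyRows D) :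
    row (compress D) (rowRank D p) = row D p :=
  row_mapRows rowRank_strictMonoOn.injOn hp

lemma lRow_compress_rowRank (hp : p ∈ nonemptyRows D) :
    lRow (compress D) (rowRank D p) = lRow D p := by
  rw [lRow, row_compress_rowRank hp, lRow]

lemma nonemptyRows_compress : nonemptyRows (compress D) = Finset.Icc 1 (nonemptyRows D).card := by
  ext c
  rw [compress_eq_mapRows, nonemptyRows_mapRows, Finset.mem_image, Finset.mem_Icc]
  refine ⟨fun ⟨p, hp, hpc⟩ => hpc ▸ ⟨one_le_rowRank hp, rowRank_le_card⟩,
    fun ⟨h1, h2⟩ => exists_rowRank_eq h1 h2⟩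

lemma lRow_compress_of_notMem (hc : ¬(1 ≤ c ∧ c ≤ (nonemptyRows D).card)) :
    lRow (compress D) c = ⊤ := by
  refine lRow_eq_top (Finset.not_nonempty_iff_eq_empty.1 fun hne => hc ?_)
  rw [← Finset.mem_Icc, ← nonemptyRows_compress]
  exact mem_nonemptyRows.2 hne

lemma lRow_compress_eq_of_nonemptyRows_eq (h : nonemptyRows D' = nonemptyRows D)
    (hc : ∀ p ∈ nonemptyRows D, rowRank D p = c → lRow D' p = lRow D p) :
    lRow (compress D') c = lRow (compress D) c := by
  by_cases hcS : 1 ≤ c ∧ c ≤ (nonemptyRows D).card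
  · obtain ⟨p, hp, rfl⟩ := exists_rowRank_eq hcS.1 hcS.2
    have hp' : p ∈ nonemptyRows D' := h ▸ hp
    rw [← rowRank_eq_of_nonemptyRows_eq h, lRow_compress_rowRank hp',
      rowRank_eq_of_nonemptyRows_eq h, lRow_compress_rowRank hp, hc p hp rfl]
  · rw [lRow_compress_of_notMem hcS, lRow_compress_of_notMem (h ▸ hcS)]

lemma antitoneOn_row_compress {α : Type*} [Preorder α] (f : Finset ℕ → α)
    (h : AntitoneOn (fun p => f (row D p)) (nonemptyRows D)) :
    AntitoneOn (fun c => f (row (compress D) c)) (Set.Icc 1 (nonemptyRows D).card) := by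
  rintro c ⟨hc, -⟩ c' ⟨-, hc'⟩ hcc'
  obtain ⟨p, hp, rfl⟩ := exists_rowRank_eq hc (hcc'.trans hc')
  obtain ⟨p', hp', rfl⟩ := exists_rowRank_eq (hc.trans hcc') hc'
  simp only [row_compress_rowRank hp, row_compress_rowRank hp']
  exact h hp hp' ((rowRank_strictMonoOn.le_iff_le hp hp').1 hcc')

end compress

lemma Violation.row_nonempty (h : Violation D i) : (row D i).Nonempty := by
  rw [Finset.nonempty_iff_ne_empty]
  intro hrow
  exact not_top_lt (lRow_eq_top hrow ▸ h.2)

lemma MaxViolation.lRow_mono (h : MaxViolation D i) {p p' : ℕ} (hip : i ≤ p) (hpp' : p ≤ p') :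
    lRow D p ≤ lRow D p' := by
  refine monoL_of_succ (fun e hie _ => not_lt.1 fun hlt => ?_) p p' hip hpp' le_rfl
  have := h.2 (e + 1) ⟨by have := h.1.1; omega, by simpa using hlt⟩
  omega

lemma MaxViolation.isLastDescent (h : MaxViolation D i) (hprev : i - 1 ∈ nonemptyRows D) :
    IsLastDescent (lRow (compress D)) (nonemptyRows D).card (rowRank D i) := by
  have hi : i ∈ nonemptyRows D := mem_nonemptyRows.2 h.1.row_nonempty
  have hrank := rowRank_sub_one_add_one (by have := h.1.1; omega) hi
  refine ⟨by have := one_le_rowRank hprev; omega, rowRank_le_card,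
    fun e e' he hee' he' => ?_, ?_⟩
  · obtain ⟨p, hp, rfl⟩ := exists_rowRank_eq ((one_le_rowRank hi).trans he) (hee'.trans he')
    obtain ⟨p', hp', rfl⟩ :=
      exists_rowRank_eq ((one_le_rowRank hi).trans (he.trans hee')) he'
    rw [lRow_compress_rowRank hp, lRow_compress_rowRank hp']
    exact h.lRow_mono ((rowRank_strictMonoOn.le_iff_le hi hp).1 he)
      ((rowRank_strictMonoOn.le_iff_le hp hp').1 hee')
  · rw [show rowRank D i - 1 = rowRank D (i - 1) by omega, lRow_compress_rowRank hi,
      lRow_compress_rowRank hprev]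
    exact h.1.2

namespace IsStepA

variable (hA : IsStepA D D' i)
include hA

lemma row_of_ne (hp : p ≠ i) (hp' : p ≠ i - 1) : row D' p = row D p := by
  ext q
  simp only [mem_row]
  exact (hA p q).2.2 (by tauto)

lemma mem_self :
    (i, q) ∈ D' ↔ InL D i q ∧ (i - 1, q) ∈ D ∨ ¬InL D i q ∧ (i, q) ∈ D := by
  by_cases hq : InL D i q
  · simp only [hq, (hA i q).1 rfl hq, true_and, not_true_eq_false, false_and, or_false]
  · simp only [hq, (hA i q).2.2 fun h => hq h.2, false_and, not_false_eq_true, true_and, false_or]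

lemma mem_prev :
    (i - 1, q) ∈ D' ↔ InL D i q ∧ (i, q) ∈ D ∨ ¬InL D i q ∧ (i - 1, q) ∈ D := by
  by_cases hq : InL D i q
  · simp only [hq, (hA (i - 1) q).2.1 rfl hq, true_and, not_true_eq_false, false_and, or_false]
  · simp only [hq, (hA (i - 1) q).2.2 fun h => hq h.2, false_and, not_false_eq_true, true_and,
      false_or]

lemma eq_mapRows_of_prev_empty (hi : 2 ≤ i) (hprev : i - 1 ∉ nonemptyRows D) :
    D' = mapRows (fun p => if p = i then i - 1 else p) D := by
  have hnot : ∀ q, (i - 1, q) ∉ D := fun q hq =>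
    hprev (mem_nonemptyRows.2 ⟨q, mem_row.2 hq⟩)
  have hInL : ∀ q, InL D i q ↔ lRow D i ≤ q := fun q => by
    rw [InL, lRow_eq_top (Finset.not_nonempty_iff_eq_empty.1 (mt mem_nonemptyRows.2 hprev))]
    exact and_iff_left (ENat.natCast_lt_top q)
  have hmem : ∀ q, (i, q) ∈ D → InL D i q := fun q hq => (hInL q).2 (lRow_le hq)
  ext ⟨p, q⟩
  rw [mem_mapRows]
  by_cases hpi : p = i
  · subst hpi
    rw [hA.mem_self]
    grind
  by_cases hpi' : p = i - 1
  · subst hpi'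
    rw [hA.mem_prev]
    grind
  · rw [← mem_row, hA.row_of_ne hpi hpi', mem_row]
    grind

lemma rows_eq_Icc (hD : RowConvex D) {j₁ : ℕ} (hj : (i, j) ∈ D) (hjl : lRow D i = j)
    (hj₁ : (i - 1, j₁) ∈ D) (hjl₁ : lRow D (i - 1) = j₁) (hlt : j < j₁)
    (hok : j₁ - 1 ≤ rRow D i) :
    row D' i = Finset.Icc j₁ (rRow D i) ∧ row D' (i - 1) = Finset.Icc j (rRow D (i - 1)) := by
  have hInL : ∀ q, InL D i q ↔ j ≤ q ∧ q < j₁ := fun q => by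
    rw [InL, hjl, hjl₁, Nat.cast_le, Nat.cast_lt]
  have hmem : ∀ q, (i, q) ∈ D ↔ j ≤ q ∧ q ≤ rRow D i := fun q => by
    rw [← mem_row, row_eq_Icc_of_rowConvex hD hj hjl, Finset.mem_Icc]
  have hmem₁ : ∀ q, (i - 1, q) ∈ D ↔ j₁ ≤ q ∧ q ≤ rRow D (i - 1) := fun q => by
    rw [← mem_row, row_eq_Icc_of_rowConvex hD hj₁ hjl₁, Finset.mem_Icc]
  have hj₁r := le_rRow hj₁
  constructor <;> ext q <;>
    simp only [mem_row, hA.mem_self, hA.mem_prev, hInL, hmem, hmem₁, Finset.mem_Icc] <;>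
    omega

end IsStepA

lemma BRow.mem (hjl : lRow D i = j) (hp : BRow D i p) : (p, j) ∈ D := by
  have hne : (row D p).Nonempty := by
    rw [Finset.nonempty_iff_ne_empty]
    intro hrow
    exact ENat.top_ne_natCast j (lRow_eq_top hrow ▸ hp.2.trans hjl)
  obtain ⟨j', hj', hjl'⟩ := exists_mem_lRow_eq hne
  obtain rfl : j' = j := Nat.cast_injective (hjl'.symm.trans (hp.2.trans hjl))
  exact hj'

lemma MaxViolation.bRow_of_le (h : MaxViolation D i) {p' : ℕ} (hip : i ≤ p) (hpp' : p ≤ p')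
    (hp' : BRow D i p') : BRow D i p :=
  ⟨hip, le_antisymm (hp'.2 ▸ h.lRow_mono hip hpp') (h.lRow_mono le_rfl hip)⟩

namespace IsStepB

variable (hB : IsStepB D D' i)
include hB

lemma row_of_not_bRow (hp : ¬BRow D i p) : row D' p = row D p := by
  ext q
  simp only [mem_row]
  exact (hB p q).2 hp

variable (hD : RowConvex D) (hjl : lRow D i = j)
include hD hjl

lemma row_of_bRow (hp : BRow D i p) : row D' p = Finset.Icc (j + 1) (rRow D p + 1) := by
  have hj := hp.mem hjl
  have hmem : ∀ q, (p, q) ∈ D ↔ j ≤ q ∧ q ≤ rRow D p := fun q => by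
    rw [← mem_row, row_eq_Icc_of_rowConvex hD hj (hp.2.trans hjl), Finset.mem_Icc]
  have hjr := le_rRow hj
  ext q
  simp only [mem_row, (hB p q).1 hp, hmem, hp.2, hjl, ne_eq, Nat.cast_inj, Finset.mem_Icc]
  omega

lemma lRow_of_bRow (hp : BRow D i p) : lRow D' p = (j + 1 : ℕ) :=
  lRow_eq_of_row_eq_Icc (hB.row_of_bRow hD hjl hp) (by have := le_rRow (hp.mem hjl); omega)

lemma rRow_of_bRow (hp : BRow D i p) : rRow D' p = rRow D p + 1 :=
  rRow_eq_of_row_eq_Icc (hB.row_of_bRow hD hjl hp) (by have := le_rRow (hp.mem hjl); omega)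

lemma nonemptyRows_eq : nonemptyRows D' = nonemptyRows D := by
  ext p
  rw [mem_nonemptyRows, mem_nonemptyRows]
  by_cases hp : BRow D i p
  · rw [hB.row_of_bRow hD hjl hp, Finset.nonempty_Icc]
    exact iff_of_true (by have := le_rRow (hp.mem hjl); omega) ⟨j, mem_row.2 (hp.mem hjl)⟩
  · rw [hB.row_of_not_bRow hp]

end IsStepB

end Diagrams

section Invariant

variable {D D' : Dg} {i j p q : ℕ}

structure AlmostSkewModEmpty (D : Dg) : Prop where
  one_le_col : ∀ b ∈ D, 1 ≤ b.2
  rowConvex : RowConvex D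
  rRow_anti : AntitoneOn (rRow D) (nonemptyRows D)
  isLShape : IsLShape (lRow (compress D)) (nonemptyRows D).card

namespace AlmostSkewModEmpty

variable (h : AlmostSkewModEmpty D)
include h

lemma almostSkew_compress : AlmostSkew (compress D) (nonemptyRows D).card := by
  refine ⟨fun c => ?_, rowConvex_mapRows rowRank_strictMonoOn.injOn h.rowConvex,
    fun c c' hc hcc' hc' => antitoneOn_row_compress (fun s => s.sup id) h.rRow_anti
      ⟨hc, hcc'.trans hc'⟩ ⟨hc.trans hcc', hc'⟩ hcc',
    h.isLShape⟩
  rw [← mem_nonemptyRows, nonemptyRows_compress, Finset.mem_Icc]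

lemma mapRows {σ : ℕ → ℕ} (hσ : StrictMonoOn σ (nonemptyRows D)) :
    AlmostSkewModEmpty (mapRows σ D) := by
  refine ⟨fun ⟨p, q⟩ hb => ?_, rowConvex_mapRows hσ.injOn h.rowConvex, ?_, ?_⟩
  · obtain ⟨p₀, hp₀, -⟩ := mem_mapRows.1 hb
    exact h.one_le_col (p₀, q) hp₀
  · rw [nonemptyRows_mapRows]
    rintro _ hσp _ hσp' hpp'
    obtain ⟨p, hp, rfl⟩ := Finset.mem_image.1 hσp
    obtain ⟨p', hp', rfl⟩ := Finset.mem_image.1 hσp'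
    rw [rRow, rRow, row_mapRows hσ.injOn hp, row_mapRows hσ.injOn hp']
    exact h.rRow_anti hp hp' ((hσ.le_iff_le hp hp').1 hpp')
  · rw [compress_mapRows hσ, nonemptyRows_mapRows, Finset.card_image_of_injOn hσ.injOn]
    exact h.isLShape

lemma of_rows (hrows : ∀ p, row D' p = row D p ∨ ∃ a b, 1 ≤ a ∧ row D' p = Finset.Icc a b)
    (hr : AntitoneOn (rRow D') (nonemptyRows D'))
    (hL : IsLShape (lRow (compress D')) (nonemptyRows D').card) : AlmostSkewModEmpty D' := by
  refine ⟨fun ⟨p, q⟩ hb => ?_, fun p j j' j'' hj hj' h1 h2 => ?_, hr, hL⟩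
  · rcases hrows p with hrow | ⟨a, b, ha, hrow⟩
    · rw [← mem_row, hrow, mem_row] at hb
      exact h.one_le_col _ hb
    · rw [← mem_row, hrow, Finset.mem_Icc] at hb
      exact ha.trans hb.1
  · simp only [← mem_row] at hj hj' ⊢
    rcases hrows p with hrow | ⟨a, b, -, hrow⟩
    · rw [hrow, mem_row] at hj hj' ⊢
      exact h.rowConvex p j j' j'' hj hj' h1 h2
    · rw [hrow, Finset.mem_Icc] at hj hj' ⊢
      omega

lemma stepA_of_prev_empty (hA : IsStepA D D' i) (hi : 2 ≤ i) (hprev : i - 1 ∉ nonemptyRows D) :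
    AlmostSkewModEmpty D' := by
  rw [hA.eq_mapRows_of_prev_empty hi hprev]
  refine h.mapRows fun x hx y hy hxy => ?_
  have hx' : x ≠ i - 1 := fun h => hprev (h ▸ hx)
  have hy' : y ≠ i - 1 := fun h => hprev (h ▸ hy)
  split_ifs <;> omega

section prevNonempty

variable (hmv : MaxViolation D i) (hprev : i - 1 ∈ nonemptyRows D) (hj : (i, j) ∈ D)
  (hjl : lRow D i = j) (hrest : ∀ p, p ≠ i → p ≠ i - 1 → row D' p = row D p)
  (hjr : j ≤ rRow D (i - 1)) (hrow₁ : row D' (i - 1) = Finset.Icc j (rRow D (i - 1)))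
include hmv hprev hj hjl hrest hjr hrow₁

lemma isLShape_of_swap {j₁ : ℕ} (hjl₁ : lRow D (i - 1) = j₁)
    (hrow : row D' i = Finset.Icc j₁ (rRow D i)) (hsurv : j₁ ≤ rRow D i)
    (hrows : nonemptyRows D' = nonemptyRows D) :
    IsLShape (lRow (compress D')) (nonemptyRows D).card := by
  have hi : i ∈ nonemptyRows D := mem_nonemptyRows.2 ⟨j, mem_row.2 hj⟩
  have hrank := rowRank_eq_of_nonemptyRows_eq hrows
  have hrk := rowRank_sub_one_add_one (by have := hmv.1.1; omega) hi
  refine h.isLShape.of_swap (hmv.isLastDescent hprev) ?_ ?_ fun e he he' =>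
    lRow_compress_eq_of_nonemptyRows_eq hrows fun p hp hpe => ?_
  · rw [show rowRank D i - 1 = rowRank D' (i - 1) by rw [hrank]; omega,
      lRow_compress_rowRank (hrows ▸ hprev), lRow_eq_of_row_eq_Icc hrow₁ hjr, ← hjl,
      lRow_compress_rowRank hi]
  · rw [← congrFun hrank i, lRow_compress_rowRank (hrows ▸ hi),
      lRow_eq_of_row_eq_Icc hrow hsurv, ← hjl₁,
      show rowRank D' i - 1 = rowRank D (i - 1) by rw [hrank]; omega,
      lRow_compress_rowRank hprev]
  · exact lRow_eq_of_row_eq (hrest p (by rintro rfl; exact he' hpe.symm)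
      (by rintro rfl; omega))

lemma of_swap {j₁ : ℕ} (hjl₁ : lRow D (i - 1) = j₁)
    (hrow : row D' i = Finset.Icc j₁ (rRow D i)) (hsurv : j₁ ≤ rRow D i) :
    AlmostSkewModEmpty D' := by
  have hj1 : 1 ≤ j := h.one_le_col _ hj
  have hjj₁ : j < j₁ := by exact_mod_cast hjl ▸ hjl₁ ▸ hmv.1.2
  have hrows : nonemptyRows D' = nonemptyRows D := by
    ext p
    rw [mem_nonemptyRows, mem_nonemptyRows]
    by_cases hp : p = i
    · subst hp
      exact iff_of_true (hrow ▸ Finset.nonempty_Icc.2 hsurv) ⟨j, mem_row.2 hj⟩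
    by_cases hp' : p = i - 1
    · subst hp'
      exact iff_of_true (hrow₁ ▸ Finset.nonempty_Icc.2 hjr) (mem_nonemptyRows.1 hprev)
    rw [hrest p hp hp']
  have hr : ∀ p, rRow D' p = rRow D p := fun p => by
    by_cases hp : p = i
    · subst hp; exact rRow_eq_of_row_eq_Icc hrow hsurv
    by_cases hp' : p = i - 1
    · subst hp'; exact rRow_eq_of_row_eq_Icc hrow₁ hjr
    exact rRow_eq_of_row_eq (hrest p hp hp')
  refine h.of_rows (fun p => ?_) (fun p hp p' hp' hpp' => ?_)
    (hrows ▸ h.isLShape_of_swap hmv hprev hj hjl hrest hjr hrow₁ hjl₁ hrow hsurv hrows)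
  · by_cases hp : p = i
    · exact Or.inr ⟨j₁, _, by omega, hp ▸ hrow⟩
    by_cases hp' : p = i - 1
    · exact Or.inr ⟨j, _, hj1, hp' ▸ hrow₁⟩
    exact Or.inl (hrest p hp hp')
  · rw [hr, hr]
    exact h.rRow_anti (hrows ▸ hp) (hrows ▸ hp') hpp'

lemma isLShape_of_merge (hrows : nonemptyRows D' = (nonemptyRows D).erase i) :
    IsLShape (lRow (compress D')) ((nonemptyRows D).card - 1) := by
  have hi : i ∈ nonemptyRows D := mem_nonemptyRows.2 ⟨j, mem_row.2 hj⟩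
  have hi2 : 2 ≤ i := hmv.1.1
  have hrank := rowRank_of_nonemptyRows_eq_erase hrows hi
  have hrk := rowRank_sub_one_add_one (by omega) hi
  have hmem : ∀ p ∈ nonemptyRows D, p ≠ i → p ≠ i - 1 →
      lRow (compress D') (rowRank D' p) = lRow (compress D) (rowRank D p) := fun p hp hpi hpi' => by
    rw [lRow_compress_rowRank (hrows ▸ Finset.mem_erase.2 ⟨hpi, hp⟩),
      lRow_eq_of_row_eq (hrest p hpi hpi'), lRow_compress_rowRank hp]
  refine h.isLShape.of_merge (hmv.isLastDescent hprev) (fun e he => ?_) ?_ (fun e he => ?_)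
  · by_cases he1 : 1 ≤ e
    swap
    · rw [lRow_compress_of_notMem (by omega), lRow_compress_of_notMem (by omega)]
    obtain ⟨p, hp, rfl⟩ := exists_rowRank_eq (D := D) he1
      (by have := rowRank_le_card (D := D) (x := i); omega)
    have hpi : p < i - 1 := by
      by_contra! hpi
      have := rowRank_mono (D := D) hpi
      omega
    rw [← hmem p hp (by omega) (by omega), hrank, if_neg (by omega)]
  · rw [show rowRank D i - 1 = rowRank D' (i - 1) by rw [hrank, if_neg (by omega)]; omega,
      lRow_compress_rowRank (hrows ▸ Finset.mem_erase.2 ⟨by omega, hprev⟩),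
      lRow_eq_of_row_eq_Icc hrow₁ hjr, ← hjl, lRow_compress_rowRank hi]
  · by_cases he' : e + 1 ≤ (nonemptyRows D).card
    swap
    · rw [lRow_compress_of_notMem (by rw [hrows, Finset.card_erase_of_mem hi]; omega),
        lRow_compress_of_notMem (by omega)]
    obtain ⟨p, hp, hpe⟩ := exists_rowRank_eq (D := D) (by omega) he'
    have hip : i < p := (rowRank_strictMonoOn.lt_iff_lt hi hp).1 (by omega)
    rw [← hpe, ← hmem p hp (by omega) (by omega), hrank, if_pos hip.le]
    congr 1
    omega

lemma of_merge (hrow : row D' i = ∅) : AlmostSkewModEmpty D' := by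
  have hi : i ∈ nonemptyRows D := mem_nonemptyRows.2 ⟨j, mem_row.2 hj⟩
  have hrows : nonemptyRows D' = (nonemptyRows D).erase i := by
    ext p
    rw [Finset.mem_erase, mem_nonemptyRows, mem_nonemptyRows]
    by_cases hp : p = i
    · subst hp
      simp [hrow]
    by_cases hp' : p = i - 1
    · subst hp'
      exact iff_of_true (hrow₁ ▸ Finset.nonempty_Icc.2 hjr) ⟨hp, mem_nonemptyRows.1 hprev⟩
    rw [hrest p hp hp', and_iff_right hp]
  have hr : ∀ p ∈ nonemptyRows D', rRow D' p = rRow D p := fun p hp => by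
    by_cases hp' : p = i - 1
    · subst hp'; exact rRow_eq_of_row_eq_Icc hrow₁ hjr
    exact rRow_eq_of_row_eq (hrest p (Finset.ne_of_mem_erase (hrows ▸ hp)) hp')
  refine h.of_rows (fun p => ?_) (fun p hp p' hp' hpp' => ?_) ?_
  · by_cases hp : p = i
    · exact Or.inr ⟨1, 0, le_rfl, hp ▸ hrow⟩
    by_cases hp' : p = i - 1
    · exact Or.inr ⟨j, _, h.one_le_col _ hj, hp' ▸ hrow₁⟩
    exact Or.inl (hrest p hp hp')
  · rw [hr p hp, hr p' hp']
    rw [hrows] at hp hp'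
    exact h.rRow_anti (Finset.mem_of_mem_erase hp) (Finset.mem_of_mem_erase hp') hpp'
  · rw [hrows, Finset.card_erase_of_mem hi]
    exact h.isLShape_of_merge hmv hprev hj hjl hrest hjr hrow₁ hrows

end prevNonempty

lemma stepA_of_prev_nonempty (hmv : MaxViolation D i) (hok : StepAOk D i) (hA : IsStepA D D' i)
    (hprev : i - 1 ∈ nonemptyRows D) : AlmostSkewModEmpty D' := by
  obtain ⟨j, hj, hjl⟩ := exists_mem_lRow_eq (Violation.row_nonempty hmv.1)
  obtain ⟨j₁, hj₁, hjl₁⟩ := exists_mem_lRow_eq (mem_nonemptyRows.1 hprev)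
  have hlt : j < j₁ := by
    have := hmv.1.2
    rw [hjl, hjl₁] at this
    exact_mod_cast this
  have hok' : j₁ - 1 ≤ rRow D i := by
    rcases hok.2 with hok | hok
    · rw [hjl₁] at hok
      exact_mod_cast hok
    · exact absurd hok (Finset.nonempty_iff_ne_empty.1 (mem_nonemptyRows.1 hprev))
  obtain ⟨hrow, hrow₁⟩ := hA.rows_eq_Icc h.rowConvex hj hjl hj₁ hjl₁ hlt hok'
  have hrest : ∀ p, p ≠ i → p ≠ i - 1 → row D' p = row D p := fun p => hA.row_of_ne
  have hjr : j ≤ rRow D (i - 1) := hlt.le.trans (le_rRow hj₁)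
  by_cases hsurv : j₁ ≤ rRow D i
  · exact h.of_swap hmv hprev hj hjl hrest hjr hrow₁ hjl₁ hrow hsurv
  · refine h.of_merge hmv hprev hj hjl hrest hjr hrow₁ ?_
    rw [hrow, Finset.Icc_eq_empty (by omega)]

section stepB

variable (hmv : MaxViolation D i) (hB : IsStepB D D' i) (hjl : lRow D i = j)
include hmv hB hjl

lemma rRow_anti_of_stepB (hi : i ∈ nonemptyRows D) (hprev : i - 1 ∈ nonemptyRows D)
    (hri : rRow D i + 1 ≤ rRow D (i - 1)) : AntitoneOn (rRow D') (nonemptyRows D') := by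
  rw [hB.nonemptyRows_eq h.rowConvex hjl]
  intro p hp p' hp' hpp'
  have hr := h.rRow_anti hp hp' hpp'
  by_cases hb' : BRow D i p'
  · rw [hB.rRow_of_bRow h.rowConvex hjl hb']
    by_cases hb : BRow D i p
    · rw [hB.rRow_of_bRow h.rowConvex hjl hb]
      omega
    · have hpi : p < i := by
        by_contra! hip
        exact hb (hmv.bRow_of_le hip hpp' hb')
      rw [rRow_eq_of_row_eq (hB.row_of_not_bRow hb)]
      have := h.rRow_anti hi hp' hb'.1
      have := h.rRow_anti hp hprev (by omega : p ≤ i - 1)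
      omega
  · rw [rRow_eq_of_row_eq (hB.row_of_not_bRow hb')]
    by_cases hb : BRow D i p
    · rw [hB.rRow_of_bRow h.rowConvex hjl hb]
      omega
    · rwa [rRow_eq_of_row_eq (hB.row_of_not_bRow hb)]

lemma isLShape_of_stepB (hi : i ∈ nonemptyRows D) (hprev : i - 1 ∈ nonemptyRows D) :
    IsLShape (lRow (compress D')) (nonemptyRows D').card := by
  have hrows := hB.nonemptyRows_eq h.rowConvex hjl
  have hrank := rowRank_eq_of_nonemptyRows_eq hrows
  have hd := hmv.isLastDescent hprev
  have hbRow : ∀ p ∈ nonemptyRows D, rowRank D i ≤ rowRank D p →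
      (BRow D i p ↔ lRow (compress D) (rowRank D p) = lRow (compress D) (rowRank D i)) :=
    fun p hp hip => by
      rw [lRow_compress_rowRank hp, lRow_compress_rowRank hi, BRow,
        ← rowRank_strictMonoOn.le_iff_le hi hp, and_iff_right hip]
  rw [hrows]
  refine h.isLShape.of_bump hd (fun e he => ?_) (fun e he he' hec => ?_)
    (fun e he he' hec => ?_)
  · refine lRow_compress_eq_of_nonemptyRows_eq hrows fun p hp hpe =>
      lRow_eq_of_row_eq (hB.row_of_not_bRow fun hb => ?_)
    exact absurd (rowRank_mono (D := D) hb.1) (by omega)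
  · obtain ⟨p, hp, rfl⟩ := exists_rowRank_eq (D := D) (by have := hd.two_le; omega) he'
    rw [← congrFun hrank p, lRow_compress_rowRank (hrows ▸ hp),
      hB.lRow_of_bRow h.rowConvex hjl ((hbRow p hp he).2 hec), lRow_compress_rowRank hi, hjl]
    rfl
  · obtain ⟨p, hp, rfl⟩ := exists_rowRank_eq (D := D) (by have := hd.two_le; omega) he'
    rw [← congrFun hrank p, lRow_compress_rowRank (hrows ▸ hp),
      lRow_eq_of_row_eq (hB.row_of_not_bRow (mt (hbRow p hp he).1 hec)), hrank,
      lRow_compress_rowRank hp]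

end stepB

lemma stepB (hmv : MaxViolation D i) (hok : StepBOk D i) (hB : IsStepB D D' i) :
    AlmostSkewModEmpty D' := by
  obtain ⟨j, hj, hjl⟩ := exists_mem_lRow_eq (Violation.row_nonempty hmv.1)
  have hi : i ∈ nonemptyRows D := mem_nonemptyRows.2 ⟨j, mem_row.2 hj⟩
  have hri : rRow D i + 1 ≤ rRow D (i - 1) := by
    have := hok.2
    have := le_rRow hj
    have := h.one_le_col _ hj
    omega
  have hprev : i - 1 ∈ nonemptyRows D := by
    by_contra hprev
    have hr₀ : rRow D (i - 1) = 0 := by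
      rw [rRow, Finset.not_nonempty_iff_eq_empty.1 (mt mem_nonemptyRows.2 hprev), Finset.sup_empty]
      rfl
    omega
  refine h.of_rows (fun p => ?_) (h.rRow_anti_of_stepB hmv hB hjl hi hprev hri)
    (h.isLShape_of_stepB hmv hB hjl hi hprev)
  by_cases hp : BRow D i p
  · exact Or.inr ⟨j + 1, _, by omega, hB.row_of_bRow h.rowConvex hjl hp⟩
  · exact Or.inl (hB.row_of_not_bRow hp)

lemma algStep (hstep : AlgStep D D') : AlmostSkewModEmpty D' := by
  obtain ⟨i, hmv, ⟨hok, hA⟩ | ⟨hok, hB⟩⟩ := hstep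
  · by_cases hprev : i - 1 ∈ nonemptyRows D
    · exact h.stepA_of_prev_nonempty hmv hok hA hprev
    · exact h.stepA_of_prev_empty hA hmv.1.1 hprev
  · exact h.stepB hmv hok hB

end AlmostSkewModEmpty

end Invariant

lemma IsPartition.antitoneOn {f : ℕ → ℕ} (hf : IsPartition f) : AntitoneOn f (Set.Ici 1) := by
  rintro p hp q - hpq
  induction q, hpq using Nat.le_induction with
  | base => rfl
  | succ n hpn ih => exact (hf.2 n (hp.trans hpn)).trans ih

section skewD

variable {lam mu : ℕ → ℕ} {k p q : ℕ}

lemma mem_skewD :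
    (p, q) ∈ skewD lam mu k ↔ (1 ≤ p ∧ p ≤ k) ∧ mu p + 1 ≤ q ∧ q ≤ lam p := by
  simp only [skewD, Finset.mem_biUnion, Finset.mem_image, Finset.mem_Icc, Prod.mk.injEq]
  constructor
  · rintro ⟨p, hp, q, hq, rfl, rfl⟩
    exact ⟨hp, hq⟩
  · rintro ⟨hp, hq⟩
    exact ⟨p, hp, q, hq, rfl, rfl⟩

lemma row_skewD (hp : p ∈ nonemptyRows (skewD lam mu k)) :
    row (skewD lam mu k) p = Finset.Icc (mu p + 1) (lam p) ∧ mu p + 1 ≤ lam p := by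
  obtain ⟨q, hq⟩ := mem_nonemptyRows.1 hp
  have hpk := (mem_skewD.1 (mem_row.1 hq)).1
  refine ⟨?_, by have := (mem_skewD.1 (mem_row.1 hq)).2; omega⟩
  ext q
  rw [mem_row, mem_skewD, Finset.mem_Icc, and_iff_right hpk]

lemma almostSkewModEmpty_skewD (hlam : IsPartition lam) (hmu : IsPartition mu)
    (hne : (skewD lam mu k).Nonempty) : AlmostSkewModEmpty (skewD lam mu k) := by
  have hp₁ : ∀ p ∈ nonemptyRows (skewD lam mu k), 1 ≤ p := fun p hp => by
    obtain ⟨q, hq⟩ := mem_nonemptyRows.1 hp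
    exact (mem_skewD.1 (mem_row.1 hq)).1.1
  have hl : AntitoneOn (lRow (skewD lam mu k)) (nonemptyRows (skewD lam mu k)) :=
    fun p hp p' hp' hpp' => by
    obtain ⟨hrow, hlt⟩ := row_skewD hp
    obtain ⟨hrow', hlt'⟩ := row_skewD hp'
    rw [lRow_eq_of_row_eq_Icc hrow hlt, lRow_eq_of_row_eq_Icc hrow' hlt', Nat.cast_le]
    exact Nat.succ_le_succ (hmu.antitoneOn (hp₁ p hp) ((hp₁ p hp).trans hpp') hpp')
  have hn : 1 ≤ (nonemptyRows (skewD lam mu k)).card :=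
    Finset.card_pos.2 (hne.image Prod.fst)
  have hanti : AntiL (lRow (compress (skewD lam mu k))) 1 (nonemptyRows (skewD lam mu k)).card :=
    fun c c' hc hcc' hc' => antitoneOn_row_compress (fun s => s.inf fun j => (j : ℕ∞)) hl
      ⟨hc, hcc'.trans hc'⟩ ⟨hc.trans hcc', hc'⟩ hcc'
  refine ⟨fun b hb => ?_, fun p j j' j'' hj hj' h₁ h₂ => ?_, fun p hp p' hp' hpp' => ?_,
    FirstForm.isLShape ⟨fun p q hp hpq hq => by rw [show p = q by omega],
      fun _ => hanti _ _ (by omega) (by omega) le_rfl, hanti.mono le_rfl (by omega)⟩ hn le_rfl⟩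
  · have := (mem_skewD.1 hb).2
    omega
  · rw [mem_skewD] at hj hj' ⊢
    omega
  · obtain ⟨hrow, hlt⟩ := row_skewD hp
    obtain ⟨hrow', hlt'⟩ := row_skewD hp'
    rw [rRow_eq_of_row_eq_Icc hrow hlt, rRow_eq_of_row_eq_Icc hrow' hlt']
    exact hlam.antitoneOn (hp₁ p hp) ((hp₁ p hp).trans hpp') hpp'

end skewD

theorem statement6_general (lam mu : ℕ → ℕ) (k : ℕ)
    (hlam : IsPartition lam) (hmu : IsPartition mu)
    (hne : (skewD lam mu k).Nonempty)
    (L : List Dg) (D : Dg)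
    (hhead : L.head? = some (skewD lam mu k)) (hchain : L.Chain' AlgStep) (hmem : D ∈ L) :
    AlmostSkew (compress D) (D.image Prod.fst).card := by
  have hinv : ∀ D ∈ L, AlmostSkewModEmpty D := by
    refine hchain.induction _ _ (fun _ _ hstep h => h.algStep hstep) fun hL => ?_
    rw [List.head?_eq_some_head hL, Option.some_inj] at hhead
    exact hhead ▸ almostSkewModEmpty_skewD hlam hmu hne
  exact (hinv D hmem).almostSkew_compress

/-- After deleting its empty rows, any intermediate diagram of an
execution of Algorithm 1 starting from a (nonempty) skew Young diagram is almost skew. -/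
theorem statement6 (lam mu : ℕ → ℕ) (k : ℕ)
    (hlam : IsPartition lam) (hmu : IsPartition mu) (hsub : ∀ p, mu p ≤ lam p)
    (hbd : ∀ p, k < p → lam p = 0)
    (hne : (skewD lam mu k).Nonempty)
    (L : List Dg) (D : Dg)
    (hhead : L.head? = some (skewD lam mu k)) (hchain : L.Chain' AlgStep) (hmem : D ∈ L) :
    AlmostSkew (compress D) (D.image Prod.fst).card :=
  statement6_general lam mu k hlam hmu hne L D hhead hchain hmem
end

section
/- Let D be a diagram, i_1 ≠ i_2 two row indices, and D^A the diagram obtained from D by moving boxes from row i_1 to row i_2 within their columns where possible, with φ the induced column-preserving bijection from the boxes of D to the boxes of D^A and all elements associated to D^A regarded in ℂ[Σ_D] via φ. Then for every set Y of right coset representatives of R_D ∩ R_{D^A} in R_{D^A}, the identity C(D^A)·R(D^A) = C(D)·R(D)·(Σ_{σ ∈ Y} σ) holds in ℂ[Σ_D]. -/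
/-- The sum `Σ σ` over all permutations preserving the value of `g` (e.g. the row or the
column of every box), in the group algebra `ℂ[Perm α]`. -/
noncomputable def Rsum {α : Type} [Fintype α] [DecidableEq α] (g : α → ℕ) :
    MonoidAlgebra ℂ (Equiv.Perm α) :=
  ∑ σ ∈ Finset.univ.filter (fun σ : Equiv.Perm α => ∀ b, g (σ b) = g b),
    MonoidAlgebra.single σ 1

/-- The signed sum `Σ sgn(σ)·σ` over all permutations preserving the value of `g`, in the
group algebra `ℂ[Perm α]`. -/
noncomputable def Csum {α : Type} [Fintype α] [DecidableEq α] (g : α → ℕ) :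
    MonoidAlgebra ℂ (Equiv.Perm α) :=
  ∑ σ ∈ Finset.univ.filter (fun σ : Equiv.Perm α => ∀ b, g (σ b) = g b),
    MonoidAlgebra.single σ ((Equiv.Perm.sign σ : ℤ) : ℂ)

open Finset MonoidAlgebra

namespace MonoidAlgebra

section Semiring

variable {k G : Type*} [Semiring k] [Group G]

theorem sum_single_mul_single_of_mul_mem_iff {s : Finset G} {x : G}
    (hx : ∀ g, g * x ∈ s ↔ g ∈ s) :
    (∑ g ∈ s, single g (1 : k)) * single x 1 = ∑ g ∈ s, single g 1 := by
  simp only [sum_mul, single_mul_single, one_mul]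
  exact sum_equiv (Equiv.mulRight x) (fun g => (hx g).symm) fun _ _ => rfl

theorem single_mul_sum_single_of_mul_mem_iff {s : Finset G} {x : G}
    (hx : ∀ g, x * g ∈ s ↔ g ∈ s) :
    single x (1 : k) * ∑ g ∈ s, single g 1 = ∑ g ∈ s, single g 1 := by
  simp only [mul_sum, single_mul_single, one_mul]
  exact sum_equiv (Equiv.mulLeft x) (fun g => (hx g).symm) fun _ _ => rfl

theorem sum_single_mul_sum_single_of_mul_mem_iff {s t : Finset G}
    (ht : ∀ x ∈ t, ∀ g, g * x ∈ s ↔ g ∈ s) :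
    (∑ g ∈ s, single g (1 : k)) * ∑ g ∈ t, single g 1 = #t • ∑ g ∈ s, single g 1 := by
  rw [mul_sum, ← sum_const]
  exact sum_congr rfl fun x hx => sum_single_mul_single_of_mul_mem_iff (ht x hx)

theorem sum_single_mul_sum_single_of_bijOn {E Y K : Finset G}
    (h : Set.BijOn (fun p : G × G => p.1 * p.2) ↑(E ×ˢ Y) ↑K) :
    (∑ g ∈ E, single g (1 : k)) * ∑ g ∈ Y, single g 1 = ∑ g ∈ K, single g 1 := by
  simp only [sum_mul_sum, single_mul_single, one_mul, ← sum_product']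
  exact sum_nbij _ h.mapsTo h.injOn h.surjOn fun _ _ => rfl

theorem sum_mul_sum_transversal_eq_sum [Fintype G] {H K : Subgroup G}
    [DecidablePred (· ∈ H)] [DecidablePred (· ∈ K)] (hHK : H ≤ K) {Y : Finset G}
    (hYK : ∀ σ ∈ Y, σ ∈ K) (hY : ∀ τ ∈ K, ∃! σ, σ ∈ Y ∧ τ * σ⁻¹ ∈ H) :
    (∑ g ∈ univ.filter (· ∈ H), single g (1 : k)) * ∑ σ ∈ Y, single σ 1 =
      ∑ g ∈ univ.filter (· ∈ K), single g 1 := by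
  refine sum_single_mul_sum_single_of_bijOn ⟨?_, ?_, ?_⟩
  · rintro ⟨h, σ⟩ hp
    simp only [coe_product, Set.mem_prod, coe_filter, mem_univ, true_and,
      Set.mem_ofPred_eq] at hp ⊢
    exact K.mul_mem (hHK hp.1) (hYK σ hp.2)
  · rintro ⟨h, σ⟩ hp ⟨h', σ'⟩ hp' heq
    simp only [coe_product, Set.mem_prod, coe_filter, mem_univ, true_and,
      Set.mem_ofPred_eq] at hp hp' heq
    have hσ : σ = σ' := (hY _ (K.mul_mem (hHK hp.1) (hYK σ hp.2))).unique
      ⟨hp.2, by simpa using hp.1⟩ ⟨hp'.2, by simpa [heq] using hp'.1⟩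
    subst hσ
    exact Prod.ext (mul_right_cancel heq) rfl
  · intro τ hτ
    simp only [coe_filter, mem_univ, true_and, Set.mem_ofPred_eq] at hτ
    obtain ⟨σ, ⟨hσY, hσH⟩, -⟩ := hY τ hτ
    exact ⟨(τ * σ⁻¹, σ), by simp [hσY, hσH], by simp⟩

end Semiring

variable {k G : Type*} [Field k] [CharZero k] [Group G] [Fintype G]

theorem mul_sum_eq_mul_sum_mul_sum_transversal (R RA : Subgroup G) [DecidablePred (· ∈ R)]
    [DecidablePred (· ∈ RA)] {Y : Finset G} (hYRA : ∀ σ ∈ Y, σ ∈ RA)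
    (hY : ∀ τ ∈ RA, ∃! σ, σ ∈ Y ∧ τ * σ⁻¹ ∈ R ⊓ RA) (x : MonoidAlgebra k G)
    (hx : ∀ l ∈ R, l ∉ RA → x * single l 1 * ∑ g ∈ univ.filter (· ∈ RA), single g 1 = 0) :
    x * ∑ g ∈ univ.filter (· ∈ RA), single g 1 =
      x * (∑ g ∈ univ.filter (· ∈ R), single g 1) * ∑ σ ∈ Y, single σ 1 := by
  classical
  set E := univ.filter (· ∈ R ⊓ RA)
  set F := univ.filter (fun g => g ∈ R ∧ g ∉ RA)
  have hsplit : ∑ g ∈ univ.filter (· ∈ R), single g (1 : k) =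
      ∑ g ∈ E, single g 1 + ∑ g ∈ F, single g 1 := by
    rw [← sum_filter_add_sum_filter_not _ (· ∈ RA), filter_filter, filter_filter]
    congr 1
    exact sum_congr (by ext; simp [E]) fun _ _ => rfl
  have hEY : (∑ g ∈ E, single g (1 : k)) * ∑ σ ∈ Y, single σ 1 =
      ∑ g ∈ univ.filter (· ∈ RA), single g 1 :=
    sum_mul_sum_transversal_eq_sum inf_le_right hYRA hY
  have hFE : (∑ g ∈ F, single g (1 : k)) * ∑ g ∈ E, single g 1 = #E • ∑ g ∈ F, single g 1 := by
    refine sum_single_mul_sum_single_of_mul_mem_iff fun ρ hρ g => ?_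
    simp only [E, F, mem_filter, mem_univ, true_and, Subgroup.mem_inf] at hρ ⊢
    rw [R.mul_mem_cancel_right hρ.1, RA.mul_mem_cancel_right hρ.2]
  have hFRA : x * (∑ g ∈ F, single g 1) * ∑ g ∈ univ.filter (· ∈ RA), single g 1 = 0 := by
    rw [mul_sum F _ x, sum_mul]
    refine sum_eq_zero fun l hl => ?_
    simp only [F, mem_filter, mem_univ, true_and] at hl
    exact hx l hl.1 hl.2
  have hE : (#E : k) ≠ 0 := Nat.cast_ne_zero.2 (card_ne_zero.2 ⟨1, by simp [E]⟩)
  have hFY : x * (∑ g ∈ F, single g 1) * ∑ σ ∈ Y, single σ 1 = 0 := by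
    refine (smul_eq_zero.1 ?_).resolve_left hE
    calc (#E : k) • (x * (∑ g ∈ F, single g 1) * ∑ σ ∈ Y, single σ 1)
        = x * ((∑ g ∈ F, single g 1) * ∑ g ∈ E, single g 1) * ∑ σ ∈ Y, single σ 1 := by
          rw [hFE, Nat.cast_smul_eq_nsmul, mul_smul_comm, smul_mul_assoc]
      _ = x * (∑ g ∈ F, single g 1) * ∑ g ∈ univ.filter (· ∈ RA), single g 1 := by
          rw [← hEY]; simp only [mul_assoc]
      _ = 0 := hFRA
  rw [hsplit, mul_add, add_mul, mul_assoc x, hEY, hFY, add_zero]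

end MonoidAlgebra

namespace Equiv.Perm

variable {α β : Type*}

def preservingSubgroup (g : α → β) : Subgroup (Perm α) where
  carrier := {σ | ∀ b, g (σ b) = g b}
  mul_mem' hσ hτ b := by rw [mul_apply, hσ, hτ]
  one_mem' _ := rfl
  inv_mem' {σ} hσ b := by simpa using (hσ (σ⁻¹ b)).symm

instance [Fintype α] [DecidableEq β] (g : α → β) :
    DecidablePred (· ∈ preservingSubgroup g) :=
  fun σ => inferInstanceAs (Decidable (∀ b, g (σ b) = g b))

theorem swap_mem_preservingSubgroup [DecidableEq α] {g : α → β} {x y : α} (h : g x = g y) :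
    swap x y ∈ preservingSubgroup g := fun b => by
  rw [swap_apply_def]
  split_ifs with hx hy
  · rw [hx, h]
  · rw [hy, h]
  · rfl

end Equiv.Perm

open Equiv Perm

section RowColumnSums

variable {α : Type} [Fintype α] [DecidableEq α]

theorem Rsum_eq_sum (g : α → ℕ) :
    Rsum g = ∑ σ ∈ univ.filter (· ∈ preservingSubgroup g), single σ 1 :=
  rfl

theorem single_mul_Rsum {g : α → ℕ} {r : Perm α} (hr : r ∈ preservingSubgroup g) :
    single r 1 * Rsum g = Rsum g := by
  rw [Rsum_eq_sum]
  refine single_mul_sum_single_of_mul_mem_iff fun σ => ?_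
  simpa only [mem_filter, mem_univ, true_and] using (preservingSubgroup g).mul_mem_cancel_left hr

theorem Csum_mul_single_of_sign_eq_neg_one {g : α → ℕ} {c : Perm α}
    (hc : c ∈ preservingSubgroup g) (hsign : sign c = -1) :
    Csum g * single c 1 = -Csum g := by
  rw [Csum, sum_mul, ← sum_neg_distrib]
  refine sum_equiv (Equiv.mulRight c) (fun σ => ?_) fun σ _ => ?_
  · simp only [mem_filter, mem_univ, true_and, Equiv.coe_mulRight]
    exact ((preservingSubgroup g).mul_mem_cancel_right hc).symm
  · simp [single_mul_single, hsign, ← single_neg]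

theorem Csum_mul_single_mul_Rsum_eq_zero {col row : α → ℕ} {l c r : Perm α}
    (hclr : c * l = l * r) (hc : c ∈ preservingSubgroup col) (hsign : sign c = -1)
    (hr : r ∈ preservingSubgroup row) :
    Csum col * single l 1 * Rsum row = 0 := by
  set y := Csum col * single l 1 * Rsum row
  have hy : y = -y := calc
    y = Csum col * single l 1 * (single r 1 * Rsum row) := by rw [single_mul_Rsum hr]
    _ = Csum col * single (l * r) 1 * Rsum row := by
      rw [← mul_assoc, mul_assoc (Csum col), single_mul_single, one_mul]
    _ = Csum col * single c 1 * single l 1 * Rsum row := by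
      rw [← hclr, mul_assoc (Csum col) (single c 1), single_mul_single, one_mul]
    _ = -y := by rw [Csum_mul_single_of_sign_eq_neg_one hc hsign, neg_mul, neg_mul]
  have h2y : (2 : ℂ) • y = 0 := by rw [two_smul, ← eq_neg_iff_add_eq_zero]; exact hy
  exact (smul_eq_zero.1 h2y).resolve_left two_ne_zero

end RowColumnSums

section Diagram

variable {D : Dg} {i1 i2 : ℕ}

/-- The boxes that `φ` moves from row `i1` to row `i2`. -/
abbrev IsMoved (D : Dg) (i1 i2 : ℕ) (b : {x : ℕ × ℕ // x ∈ D}) : Prop :=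
  b.val.1 = i1 ∧ (i2, b.val.2) ∉ D

/-- The row of `φ b` in `D^A`. -/
def movedRow (D : Dg) (i1 i2 : ℕ) (b : {x : ℕ × ℕ // x ∈ D}) : ℕ :=
  if IsMoved D i1 i2 b then i2 else b.val.1

theorem exists_isMoved_of_not_mem_preservingSubgroup_movedRow {l : Perm {x : ℕ × ℕ // x ∈ D}}
    (hl : l ∈ preservingSubgroup fun b => b.val.1)
    (hlA : l ∉ preservingSubgroup (movedRow D i1 i2)) :
    ∃ s, IsMoved D i1 i2 s ∧ (i2, (l s).val.2) ∈ D := by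
  by_contra! h
  have hmaps : Set.MapsTo l {b | IsMoved D i1 i2 b} {b | IsMoved D i1 i2 b} :=
    fun s hs => ⟨(hl s).trans hs.1, h s hs⟩
  have hback (b) (hb : IsMoved D i1 i2 (l b)) : IsMoved D i1 i2 b := by
    simpa using perm_symm_mapsTo_of_mapsTo l hmaps hb
  refine hlA fun b => ?_
  by_cases hb : IsMoved D i1 i2 b
  · rw [movedRow, movedRow, if_pos (show IsMoved D i1 i2 (l b) from hmaps hb), if_pos hb]
  · rw [movedRow, movedRow, if_neg (mt (hback b) hb), if_neg hb]
    exact hl b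

theorem Csum_mul_single_mul_Rsum_movedRow_eq_zero (h12 : i1 ≠ i2)
    {l : Perm {x : ℕ × ℕ // x ∈ D}} (hl : l ∈ preservingSubgroup fun b => b.val.1)
    (hlA : l ∉ preservingSubgroup (movedRow D i1 i2)) :
    Csum (fun b : {x : ℕ × ℕ // x ∈ D} => b.val.2) * single l 1 * Rsum (movedRow D i1 i2) = 0 := by
  obtain ⟨s, hs, hls⟩ := exists_isMoved_of_not_mem_preservingSubgroup_movedRow hl hlA
  set u : {x : ℕ × ℕ // x ∈ D} := ⟨(i2, (l s).val.2), hls⟩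
  have hu : l s ≠ u := fun h => h12 (by rw [← (hl s).trans hs.1, h])
  have hs_row : movedRow D i1 i2 s = i2 := if_pos hs
  have hu_row : movedRow D i1 i2 (l⁻¹ u) = i2 := by
    have hrow : (l⁻¹ u).val.1 = i2 := by simpa using (hl (l⁻¹ u)).symm
    rw [movedRow, if_neg (fun h => h12 (h.1.symm.trans hrow)), hrow]
  refine Csum_mul_single_mul_Rsum_eq_zero (c := swap (l s) u) (r := swap s (l⁻¹ u)) ?_
    (swap_mem_preservingSubgroup rfl) (sign_swap hu)
    (swap_mem_preservingSubgroup (hs_row.trans hu_row.symm))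
  rw [swap_mul_eq_mul_swap]
  simp

end Diagram

theorem statement12_general (D DA : Dg) (i1 i2 : ℕ) (h12 : i1 ≠ i2)
    (φ : {x : ℕ × ℕ // x ∈ D} ≃ {x : ℕ × ℕ // x ∈ DA})
    (hφ : ∀ b : {x : ℕ × ℕ // x ∈ D},
      (φ b).val = if b.val.1 = i1 ∧ (i2, b.val.2) ∉ D then (i2, b.val.2) else b.val)
    (Y : Finset (Equiv.Perm {x : ℕ × ℕ // x ∈ D}))
    (hY1 : ∀ σ ∈ Y, ∀ b, (φ (σ b)).val.1 = (φ b).val.1)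
    (hY2 : ∀ τ : Equiv.Perm {x : ℕ × ℕ // x ∈ D}, (∀ b, (φ (τ b)).val.1 = (φ b).val.1) →
      ∃! σ, σ ∈ Y ∧ (∀ b, ((τ * σ⁻¹) b).val.1 = b.val.1) ∧
        (∀ b, (φ ((τ * σ⁻¹) b)).val.1 = (φ b).val.1))
    :
    Csum (fun b : {x : ℕ × ℕ // x ∈ D} => (φ b).val.2) *
        Rsum (fun b : {x : ℕ × ℕ // x ∈ D} => (φ b).val.1) =
      Csum (fun b : {x : ℕ × ℕ // x ∈ D} => b.val.2) *
        Rsum (fun b : {x : ℕ × ℕ // x ∈ D} => b.val.1) *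
        (∑ σ ∈ Y, MonoidAlgebra.single σ (1 : ℂ)) := by
  have hrow (b) : (φ b).val.1 = movedRow D i1 i2 b := by
    rw [hφ, movedRow]; split_ifs <;> rfl
  have hcol (b) : (φ b).val.2 = b.val.2 := by
    rw [hφ]; split_ifs <;> rfl
  simp only [hrow, hcol] at hY1 hY2 ⊢
  exact mul_sum_eq_mul_sum_mul_sum_transversal
    (preservingSubgroup fun b : {x : ℕ × ℕ // x ∈ D} => b.val.1)
    (preservingSubgroup (movedRow D i1 i2)) hY1 hY2 _
    fun l hl hlA => Csum_mul_single_mul_Rsum_movedRow_eq_zero h12 hl hlA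

/-- With `D^A` and `φ` as above and `Y` a set of right coset
representatives of `R_D ∩ R_{D^A}` in `R_{D^A}`,
`C(D^A) · R(D^A) = C(D) · R(D) · (Σ_{σ ∈ Y} σ)` in `ℂ[Σ_D]`. -/
theorem statement12 (D DA : Dg) (i1 i2 : ℕ) (h12 : i1 ≠ i2)
    (hDA1 : ∀ p q : ℕ, p ≠ i1 → p ≠ i2 → ((p, q) ∈ DA ↔ (p, q) ∈ D))
    (hDA2 : ∀ q : ℕ, (i1, q) ∈ DA ↔ ((i1, q) ∈ D ∧ (i2, q) ∈ D))
    (hDA3 : ∀ q : ℕ, (i2, q) ∈ DA ↔ ((i1, q) ∈ D ∨ (i2, q) ∈ D))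
    (φ : {x : ℕ × ℕ // x ∈ D} ≃ {x : ℕ × ℕ // x ∈ DA})
    (hφ : ∀ b : {x : ℕ × ℕ // x ∈ D},
      (φ b).val = if b.val.1 = i1 ∧ (i2, b.val.2) ∉ D then (i2, b.val.2) else b.val)
    (Y : Finset (Equiv.Perm {x : ℕ × ℕ // x ∈ D}))
    (hY1 : ∀ σ ∈ Y, ∀ b, (φ (σ b)).val.1 = (φ b).val.1)
    (hY2 : ∀ τ : Equiv.Perm {x : ℕ × ℕ // x ∈ D}, (∀ b, (φ (τ b)).val.1 = (φ b).val.1) →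
      ∃! σ, σ ∈ Y ∧ (∀ b, ((τ * σ⁻¹) b).val.1 = b.val.1) ∧
        (∀ b, (φ ((τ * σ⁻¹) b)).val.1 = (φ b).val.1))
    :
    Csum (fun b : {x : ℕ × ℕ // x ∈ D} => (φ b).val.2) *
        Rsum (fun b : {x : ℕ × ℕ // x ∈ D} => (φ b).val.1) =
      Csum (fun b : {x : ℕ × ℕ // x ∈ D} => b.val.2) *
        Rsum (fun b : {x : ℕ × ℕ // x ∈ D} => b.val.1) *
        (∑ σ ∈ Y, MonoidAlgebra.single σ (1 : ℂ)) :=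
  statement12_general D DA i1 i2 h12 φ hφ Y hY1 hY2
end
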